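/- arXiv:2301.13139 — 4 statements merged into one kernel-verified Lean document; each statement's English description precedes it below -/
import Mathlib

section
/- Let A be a finite set, let Y ⊆ ℝ^A be a convex set containing the probability simplex Δ(A), and let h : Y → ℝ be strictly convex and differentiable on the relevant points, with Bregman divergence D_h. Let η > 0 and f ∈ ℝ^A, and let q ∈ Y be a point at which h is differentiable satisfying ∇h(q) = η·f (i.e., q = ∇h*(η f)). Let π̃ ∈ Δ(A) be a minimizer over Δ(A) of the map p ↦ D_h(p, q). Then for every π ∈ Δ(A) and every π̄ in the relative interior of Δ(A) at which h is differentiable, one has ⟨η·f − ∇h(π̄), π − π̃⟩ ≤ D_h(π, π̄) − D_h(π̃, π̄) − D_h(π, π̃). -/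
/-!
Since `π̃` minimizes `p ↦ D_h(p, q) = h p - ⟨∇h q, p⟩ + const` over the convex set `Δ(A)`, the
first-order optimality condition gives `⟨∇h π̃ - ∇h q, π - π̃⟩ ≥ 0`. The three-point identity
`D_h(π, π̄) - D_h(π̃, π̄) - D_h(π, π̃) = ⟨∇h π̃ - ∇h π̄, π - π̃⟩` and `∇h q = η f` turn this into the
claim.
-/

/-- The probability simplex over a finite set `A`, as a subset of `EuclideanSpace ℝ A`. -/
def probSimplex (A : Type*) [Fintype A] : Set (EuclideanSpace ℝ A) :=
  {p | (∀ a, 0 ≤ p a) ∧ ∑ a, p a = 1}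

/-- The Bregman divergence generated by `h`, where `gh` is the gradient of `h`:
`D_h(x, y) = h x - h y - ⟨gh y, x - y⟩`. -/
noncomputable def bregman {E : Type*} [NormedAddCommGroup E] [InnerProductSpace ℝ E]
    (h : E → ℝ) (gh : E → E) (x y : E) : ℝ :=
  h x - h y - (inner ℝ (gh y) (x - y) : ℝ)

open InnerProductSpace

theorem convex_probSimplex (A : Type*) [Fintype A] : Convex ℝ (probSimplex A) :=
  (convex_stdSimplex ℝ A).linear_preimage (WithLp.linearEquiv 2 ℝ (A → ℝ)).toLinearMap

section Gradient

variable {E : Type*} [NormedAddCommGroup E] [InnerProductSpace ℝ E] [CompleteSpace E]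

theorem IsMinOn.inner_gradient_sub_nonneg {f : E → ℝ} {g x y : E} {s : Set E}
    (hmin : IsMinOn f s x) (hx : x ∈ s) (hs : Convex ℝ s) (hf : HasGradientWithinAt f g s x)
    (hy : y ∈ s) : 0 ≤ ⟪g, y - x⟫_ℝ := by
  have hcone : y - x ∈ posTangentConeAt s x :=
    sub_mem_posTangentConeAt_of_segment_subset (hs.segment_subset hx hy)
  simpa using hmin.localize.hasFDerivWithinAt_nonneg hf hcone

end Gradient

section Bregman

variable {E : Type*} [NormedAddCommGroup E] [InnerProductSpace ℝ E]

theorem bregman_sub_bregman_sub_bregman (h : E → ℝ) (gh : E → E) (x y z : E) :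
    bregman h gh x z - bregman h gh y z - bregman h gh x y = ⟪gh y - gh z, x - y⟫_ℝ := by
  simp only [bregman, inner_sub_left, inner_sub_right]
  ring

theorem bregman_eq_sub_inner_add (h : E → ℝ) (gh : E → E) (x q : E) :
    bregman h gh x q = h x - ⟪gh q, x⟫_ℝ + (⟪gh q, q⟫_ℝ - h q) := by
  simp only [bregman, inner_sub_right]
  ring

variable [CompleteSpace E]

theorem inner_gradient_sub_nonneg_of_bregman_min {h : E → ℝ} {gh : E → E} {s : Set E} {x q y : E}
    (hmin : ∀ p ∈ s, bregman h gh x q ≤ bregman h gh p q) (hx : x ∈ s) (hs : Convex ℝ s)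
    (hgrad : HasGradientWithinAt h (gh x) s x) (hy : y ∈ s) :
    0 ≤ ⟪gh x - gh q, y - x⟫_ℝ := by
  have hmin' : IsMinOn (fun p ↦ h p - ⟪gh q, p⟫_ℝ) s x := isMinOn_iff.mpr fun p hp ↦ by
    simpa only [bregman_eq_sub_inner_add, add_le_add_iff_right] using hmin p hp
  have hgrad' : HasGradientWithinAt (fun p ↦ h p - ⟪gh q, p⟫_ℝ) (gh x - gh q) s x := by
    rw [hasGradientWithinAt_iff_hasFDerivWithinAt, map_sub]
    exact hgrad.sub (innerSL ℝ (gh q)).hasFDerivWithinAt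
  exact hmin'.inner_gradient_sub_nonneg hx hs hgrad' hy

end Bregman

theorem ampo_key_lemma_general {A : Type*} [Fintype A]
    (Y : Set (EuclideanSpace ℝ A)) (hYsub : probSimplex A ⊆ Y)
    (h : EuclideanSpace ℝ A → ℝ) (gh : EuclideanSpace ℝ A → EuclideanSpace ℝ A)
    (η : ℝ) (f : EuclideanSpace ℝ A)
    (q : EuclideanSpace ℝ A)
    (hq_dual : gh q = η • f)
    (πt : EuclideanSpace ℝ A) (hπt : πt ∈ probSimplex A)
    (hπt_grad : HasGradientWithinAt h (gh πt) Y πt)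
    (hπt_min : ∀ p ∈ probSimplex A, bregman h gh πt q ≤ bregman h gh p q)
    (π : EuclideanSpace ℝ A) (hπ : π ∈ probSimplex A)
    (πb : EuclideanSpace ℝ A) :
    (inner ℝ (η • f - gh πb) (π - πt) : ℝ) ≤
      bregman h gh π πb - bregman h gh πt πb - bregman h gh π πt := by
  have hopt := inner_gradient_sub_nonneg_of_bregman_min hπt_min hπt (convex_probSimplex A)
    (HasFDerivWithinAt.mono hπt_grad hYsub) hπ
  rw [bregman_sub_bregman_sub_bregman, ← hq_dual, ← sub_nonneg, ← inner_sub_left,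
    sub_sub_sub_cancel_right]
  exact hopt

/-- the key three-point lemma for the Bregman projection onto the simplex. -/
theorem ampo_key_lemma {A : Type*} [Fintype A] [Nonempty A]
    (Y : Set (EuclideanSpace ℝ A)) (hYconv : Convex ℝ Y) (hYsub : probSimplex A ⊆ Y)
    (h : EuclideanSpace ℝ A → ℝ) (gh : EuclideanSpace ℝ A → EuclideanSpace ℝ A)
    (hconv : StrictConvexOn ℝ Y h)
    (η : ℝ) (hη : 0 < η) (f : EuclideanSpace ℝ A)
    (q : EuclideanSpace ℝ A) (hqY : q ∈ Y)
    (hq_grad : HasGradientWithinAt h (gh q) Y q)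
    (hq_dual : gh q = η • f)
    (πt : EuclideanSpace ℝ A) (hπt : πt ∈ probSimplex A)
    (hπt_grad : HasGradientWithinAt h (gh πt) Y πt)
    (hπt_min : ∀ p ∈ probSimplex A, bregman h gh πt q ≤ bregman h gh p q)
    (π : EuclideanSpace ℝ A) (hπ : π ∈ probSimplex A)
    (πb : EuclideanSpace ℝ A) (hπb : πb ∈ intrinsicInterior ℝ (probSimplex A))
    (hπb_grad : HasGradientWithinAt h (gh πb) Y πb) :
    (inner ℝ (η • f - gh πb) (π - πt) : ℝ) ≤
      bregman h gh π πb - bregman h gh πt πb - bregman h gh π πt :=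
  ampo_key_lemma_general Y hYsub h gh η f q hq_dual πt hπt hπt_grad hπt_min π hπ πb
end

section
/- Let γ ∈ [0,1), ν ≥ 0, τ ≥ 0, let (Δ_t)_{t≥0} and (D_t)_{t≥0} be sequences of nonnegative real numbers, and let (η_t)_{t≥0} be a nondecreasing sequence of positive real numbers. Suppose that for every t ≥ 0, ν·(Δ_{t+1} − Δ_t) + Δ_t ≤ (D_t − D_{t+1}) / ((1−γ)·η_t) + (1+ν)·τ. Then for every integer T ≥ 1, (1/T)·∑_{t=0}^{T−1} Δ_t ≤ (1/T)·( D_0/((1−γ)·η_0) + ν·Δ_0 ) + (1+ν)·τ. -/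
/-!
With the potential `Φ_t = ν Δ_t + D_t / ((1 - γ) η_t)`, the recursion and the monotonicity of the
step sizes give the one-step descent `Δ_t + Φ_{t+1} ≤ Φ_t + (1 + ν) τ`: enlarging `η_{t+1}` to
`η_t` can only increase `D_{t+1} / ((1 - γ) η_{t+1})`. Telescoping over `t < T` and dropping
`Φ_T ≥ 0` bounds `∑_{t<T} Δ_t` by `Φ_0 + T (1 + ν) τ`; dividing by `T` gives the claim.
-/

open Finset

theorem sum_range_add_le_add_nsmul {α : Type*} [AddCommMonoid α] [PartialOrder α]
    [IsOrderedAddMonoid α] {a Φ : ℕ → α} {c : α} (h : ∀ t, a t + Φ (t + 1) ≤ Φ t + c) (n : ℕ) :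
    ∑ t ∈ range n, a t + Φ n ≤ Φ 0 + n • c := by
  induction n with
  | zero => simp
  | succ n ih =>
    calc ∑ t ∈ range (n + 1), a t + Φ (n + 1)
        = ∑ t ∈ range n, a t + (a n + Φ (n + 1)) := by rw [sum_range_succ, add_assoc]
      _ ≤ ∑ t ∈ range n, a t + (Φ n + c) := add_le_add_right (h n) _
      _ = (∑ t ∈ range n, a t + Φ n) + c := (add_assoc _ _ _).symm
      _ ≤ Φ 0 + n • c + c := add_le_add_left ih c
      _ = Φ 0 + (n + 1) • c := by rw [add_assoc, succ_nsmul]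

theorem sum_range_le_add_nsmul {α : Type*} [AddCommMonoid α] [PartialOrder α]
    [IsOrderedAddMonoid α] {a Φ : ℕ → α} {c : α} (h : ∀ t, a t + Φ (t + 1) ≤ Φ t + c) {n : ℕ}
    (hΦ : 0 ≤ Φ n) : ∑ t ∈ range n, a t ≤ Φ 0 + n • c :=
  (le_add_of_nonneg_right hΦ).trans (sum_range_add_le_add_nsmul h n)

noncomputable def ampoPotential (γ ν : ℝ) (Δ D η : ℕ → ℝ) (t : ℕ) : ℝ :=
  ν * Δ t + D t / ((1 - γ) * η t)

theorem ampoPotential_nonneg {γ ν : ℝ} (hγ1 : γ < 1) (hν : 0 ≤ ν) {Δ D η : ℕ → ℝ} {t : ℕ}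
    (hΔ : 0 ≤ Δ t) (hD : 0 ≤ D t) (hη : 0 < η t) : 0 ≤ ampoPotential γ ν Δ D η t :=
  add_nonneg (mul_nonneg hν hΔ) (div_nonneg hD (mul_pos (sub_pos.2 hγ1) hη).le)

theorem ampoPotential_descent {γ ν τ : ℝ} (hγ1 : γ < 1) {Δ D η : ℕ → ℝ} {t : ℕ}
    (hD : 0 ≤ D (t + 1)) (hη : 0 < η t) (hηmono : η t ≤ η (t + 1))
    (hrec : ν * (Δ (t + 1) - Δ t) + Δ t ≤
      (D t - D (t + 1)) / ((1 - γ) * η t) + (1 + ν) * τ) :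
    Δ t + ampoPotential γ ν Δ D η (t + 1) ≤ ampoPotential γ ν Δ D η t + (1 + ν) * τ := by
  have hγ : 0 < 1 - γ := sub_pos.2 hγ1
  have hstep : D (t + 1) / ((1 - γ) * η (t + 1)) ≤ D (t + 1) / ((1 - γ) * η t) :=
    div_le_div_of_nonneg_left hD (mul_pos hγ hη) (mul_le_mul_of_nonneg_left hηmono hγ.le)
  rw [sub_div] at hrec
  unfold ampoPotential
  linarith

theorem ampo_sublinear_recursion_general (γ ν τ : ℝ) (hγ1 : γ < 1)
    (hν : 0 ≤ ν)
    (Δ D : ℕ → ℝ) (hΔ : ∀ t, 0 ≤ Δ t) (hD : ∀ t, 0 ≤ D t)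
    (η : ℕ → ℝ) (hη : ∀ t, 0 < η t) (hηmono : ∀ t, η t ≤ η (t + 1))
    (hrec : ∀ t, ν * (Δ (t + 1) - Δ t) + Δ t ≤
      (D t - D (t + 1)) / ((1 - γ) * η t) + (1 + ν) * τ)
    (T : ℕ) (hT : 1 ≤ T) :
    (1 / (T : ℝ)) * ∑ t ∈ Finset.range T, Δ t ≤
      (1 / (T : ℝ)) * (D 0 / ((1 - γ) * η 0) + ν * Δ 0) + (1 + ν) * τ := by
  have hsum : ∑ t ∈ range T, Δ t ≤ ampoPotential γ ν Δ D η 0 + T • ((1 + ν) * τ) :=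
    sum_range_le_add_nsmul (fun t ↦ ampoPotential_descent hγ1 (hD _) (hη t) (hηmono t) (hrec t))
      (ampoPotential_nonneg hγ1 hν (hΔ T) (hD T) (hη T))
  have hT' : (0 : ℝ) < T := by exact_mod_cast hT
  rw [nsmul_eq_mul, ampoPotential, add_comm (ν * Δ 0)] at hsum
  calc (1 / (T : ℝ)) * ∑ t ∈ range T, Δ t
      ≤ (1 / T) * (D 0 / ((1 - γ) * η 0) + ν * Δ 0 + T * ((1 + ν) * τ)) := by gcongr
    _ = (1 / T) * (D 0 / ((1 - γ) * η 0) + ν * Δ 0) + (1 + ν) * τ := by field_simp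

/-- arithmetic core of the sublinear `O(1/T)` convergence of AMPO with
nondecreasing step sizes (Theorem 4.3, sublinear part). -/
theorem ampo_sublinear_recursion (γ ν τ : ℝ) (hγ0 : 0 ≤ γ) (hγ1 : γ < 1)
    (hν : 0 ≤ ν) (hτ : 0 ≤ τ)
    (Δ D : ℕ → ℝ) (hΔ : ∀ t, 0 ≤ Δ t) (hD : ∀ t, 0 ≤ D t)
    (η : ℕ → ℝ) (hη : ∀ t, 0 < η t) (hηmono : ∀ t, η t ≤ η (t + 1))
    (hrec : ∀ t, ν * (Δ (t + 1) - Δ t) + Δ t ≤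
      (D t - D (t + 1)) / ((1 - γ) * η t) + (1 + ν) * τ)
    (T : ℕ) (hT : 1 ≤ T) :
    (1 / (T : ℝ)) * ∑ t ∈ Finset.range T, Δ t ≤
      (1 / (T : ℝ)) * (D 0 / ((1 - γ) * η 0) + ν * Δ 0) + (1 + ν) * τ :=
  ampo_sublinear_recursion_general γ ν τ hγ1 hν Δ D hΔ hD η hη hηmono hrec T hT
end

section
/- Let γ ∈ [0,1), ν > 1, τ ≥ 0, let (Δ_t)_{t≥0} and (D_t)_{t≥0} be sequences of nonnegative real numbers, and let (η_t)_{t≥0} be a sequence of positive real numbers satisfying the geometric growth condition η_{t+1}·(ν − 1) ≥ ν·η_t for all t ≥ 0. Suppose that for every t ≥ 0, ν·(Δ_{t+1} − Δ_t) + Δ_t ≤ (D_t − D_{t+1}) / ((1−γ)·η_t) + (1+ν)·τ. Then for every integer T ≥ 0, Δ_T ≤ (1 − 1/ν)^T · ( Δ_0 + D_0 / ((1−γ)·η_0·(ν − 1)) ) + (1+ν)·τ. -/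
/-!
Take the potential `P t = Δ t + D t / ((1 - γ) * η t * (ν - 1))`. The growth condition on `η`
lets the term `-D (t + 1) / ((1 - γ) * η t)` of the recursion absorb the divergence part of
`ν * P (t + 1)`, so `ν * P (t + 1) ≤ (ν - 1) * P t + (1 + ν) * τ`. Since `(1 + ν) * τ` is the
fixed point of the resulting affine contraction with factor `1 - 1 / ν`, unrolling gives
`P T ≤ (1 - 1 / ν) ^ T * P 0 + (1 + ν) * τ`, and `Δ T ≤ P T`.
-/

theorem le_pow_mul_add_of_le_mul_add {c b : ℝ} {x : ℕ → ℝ} (hc : 0 ≤ c) (hb : 0 ≤ b)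
    (h : ∀ n, x (n + 1) ≤ c * x n + (1 - c) * b) (n : ℕ) : x n ≤ c ^ n * x 0 + b := by
  induction n with
  | zero => simpa using hb
  | succ n ih =>
    calc x (n + 1) ≤ c * x n + (1 - c) * b := h n
      _ ≤ c * (c ^ n * x 0 + b) + (1 - c) * b := by gcongr
      _ = c ^ (n + 1) * x 0 + b := by ring

theorem potential_step_le {ν a e e' d d' x x' b : ℝ} (hν : 1 < ν) (ha : 0 < a) (he : 0 < e)
    (he' : 0 < e') (hd' : 0 ≤ d') (hgrow : ν * e ≤ e' * (ν - 1))
    (hrec : ν * (x' - x) + x ≤ (d - d') / (a * e) + b) :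
    x' + d' / (a * e' * (ν - 1)) ≤
      (1 - 1 / ν) * (x + d / (a * e * (ν - 1))) + (1 - (1 - 1 / ν)) * b := by
  have hν0 : 0 < ν := by linarith
  have hν1 : 0 < ν - 1 := by linarith
  have hnext : ν * (d' / (a * e' * (ν - 1))) ≤ d' / (a * e) := by
    rw [mul_div_assoc', div_le_div_iff₀ (by positivity) (by positivity)]
    nlinarith [mul_le_mul_of_nonneg_left hgrow (mul_nonneg hd' ha.le)]
  have hcur : (ν - 1) * (d / (a * e * (ν - 1))) = d / (a * e) := by
    field_simp
  have hscaled : ν * (x' + d' / (a * e' * (ν - 1))) ≤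
      (ν - 1) * (x + d / (a * e * (ν - 1))) + b := by
    rw [sub_div] at hrec
    nlinarith
  rw [← mul_le_mul_iff_right₀ hν0]
  calc ν * (x' + d' / (a * e' * (ν - 1)))
      ≤ (ν - 1) * (x + d / (a * e * (ν - 1))) + b := hscaled
    _ = ν * ((1 - 1 / ν) * (x + d / (a * e * (ν - 1))) + (1 - (1 - 1 / ν)) * b) := by
      field_simp
      ring

theorem ampo_linear_recursion_general (γ ν τ : ℝ) (hγ1 : γ < 1)
    (hν : 1 < ν) (hτ : 0 ≤ τ)
    (Δ D : ℕ → ℝ) (hD : ∀ t, 0 ≤ D t)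
    (η : ℕ → ℝ) (hη : ∀ t, 0 < η t)
    (hηgrow : ∀ t, ν * η t ≤ η (t + 1) * (ν - 1))
    (hrec : ∀ t, ν * (Δ (t + 1) - Δ t) + Δ t ≤
      (D t - D (t + 1)) / ((1 - γ) * η t) + (1 + ν) * τ)
    (T : ℕ) :
    Δ T ≤ (1 - 1 / ν) ^ T * (Δ 0 + D 0 / ((1 - γ) * η 0 * (ν - 1))) + (1 + ν) * τ := by
  have hγ : 0 < 1 - γ := by linarith
  have hcontr : 0 ≤ 1 - 1 / ν := by
    rw [sub_nonneg, div_le_one (by linarith)]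
    exact hν.le
  have hpotential := le_pow_mul_add_of_le_mul_add
    (x := fun t => Δ t + D t / ((1 - γ) * η t * (ν - 1))) hcontr (mul_nonneg (by linarith) hτ)
    (fun t => potential_step_le hν hγ (hη t) (hη (t + 1)) (hD (t + 1)) (hηgrow t) (hrec t)) T
  have hdiv : 0 ≤ D T / ((1 - γ) * η T * (ν - 1)) :=
    div_nonneg (hD T) (mul_nonneg (mul_nonneg hγ.le (hη T).le) (by linarith))
  linarith

/-- arithmetic core of the linear convergence of AMPO with geometrically
increasing step sizes (Theorem 4.3, linear part). -/
theorem ampo_linear_recursion (γ ν τ : ℝ) (hγ0 : 0 ≤ γ) (hγ1 : γ < 1)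
    (hν : 1 < ν) (hτ : 0 ≤ τ)
    (Δ D : ℕ → ℝ) (hΔ : ∀ t, 0 ≤ Δ t) (hD : ∀ t, 0 ≤ D t)
    (η : ℕ → ℝ) (hη : ∀ t, 0 < η t)
    (hηgrow : ∀ t, ν * η t ≤ η (t + 1) * (ν - 1))
    (hrec : ∀ t, ν * (Δ (t + 1) - Δ t) + Δ t ≤
      (D t - D (t + 1)) / ((1 - γ) * η t) + (1 + ν) * τ)
    (T : ℕ) :
    Δ T ≤ (1 - 1 / ν) ^ T * (Δ 0 + D 0 / ((1 - γ) * η 0 * (ν - 1))) + (1 + ν) * τ :=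
  ampo_linear_recursion_general γ ν τ hγ1 hν hτ Δ D hD η hη hηgrow hrec T
end

section
/- Let A be a nonempty finite set, let ω < 0, and let φ : ℝ → ℝ be a continuous, strictly increasing function whose range is (ω, +∞), with (continuous, strictly increasing) inverse φ⁻¹ : (ω, +∞) → ℝ. Define h : Δ(A) → ℝ by h(p) = ∑_{a ∈ A} ∫_1^{p_a} φ⁻¹(t) dt (well defined since [0,1] ⊂ (ω, +∞)). Let x ∈ ℝ^A and π ∈ Δ(A). Then π minimizes p ↦ h(p) − ∑_{a ∈ A} x_a·p_a over Δ(A) if and only if there exists λ ∈ ℝ such that π_a = max(φ(x_a + λ), 0) for all a ∈ A (and ∑_{a ∈ A} π_a = 1). -/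
/-!
The objective is separable up to the simplex constraint, and each summand
`v ↦ ∫ t in 1..v, ψ t - c * v` is strictly convex on `v ≥ 0` since `ψ` is strictly increasing.
For a normalisation constant `λ` the point `u = max (φ (x a + λ)) 0` satisfies the first-order
conditions for `c = x a + λ`, so comparing with the tangent line gives, for every `v ≥ 0`,
`∫ t in u..v, ψ t ≥ c * (v - u)`, strictly unless `v = u`. Summing over `a`, the `λ`-terms cancel
on the simplex, hence such a point is the unique minimiser; and a `λ` making it a probability
vector exists by the intermediate value theorem.
-/

open Set Finset

section StrictMono

variable {ψ : ℝ → ℝ} {u v : ℝ}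

theorem mul_lt_intervalIntegral_of_strictMonoOn (huv : u < v) (hcont : ContinuousOn ψ (Icc u v))
    (hmono : StrictMonoOn ψ (Icc u v)) : (v - u) * ψ u < ∫ t in u..v, ψ t := by
  have hu : u ∈ Icc u v := left_mem_Icc.mpr huv.le
  have hv : v ∈ Icc u v := right_mem_Icc.mpr huv.le
  have h := intervalIntegral.integral_lt_integral_of_continuousOn_of_le_of_exists_lt huv
    continuousOn_const hcont (fun t ht => hmono.monotoneOn hu (Ioc_subset_Icc_self ht) ht.1.le)
    ⟨v, hv, hmono hu hv huv⟩
  simpa [intervalIntegral.integral_const] using h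

theorem intervalIntegral_lt_mul_of_strictMonoOn (huv : u < v) (hcont : ContinuousOn ψ (Icc u v))
    (hmono : StrictMonoOn ψ (Icc u v)) : ∫ t in u..v, ψ t < (v - u) * ψ v := by
  have hu : u ∈ Icc u v := left_mem_Icc.mpr huv.le
  have hv : v ∈ Icc u v := right_mem_Icc.mpr huv.le
  have h := intervalIntegral.integral_lt_integral_of_continuousOn_of_le_of_exists_lt huv
    hcont continuousOn_const (fun t ht => hmono.monotoneOn (Ioc_subset_Icc_self ht) hv ht.2)
    ⟨u, hu, hmono hu hv huv⟩
  simpa [intervalIntegral.integral_const] using h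

end StrictMono

/-- First-order optimality of `u` for minimising `v ↦ ∫ t in u..v, ψ t - c * v` over `v ≥ 0`. -/
def IsKKTPoint (ψ : ℝ → ℝ) (c u : ℝ) : Prop :=
  0 ≤ u ∧ c ≤ ψ u ∧ (0 < u → ψ u = c)

theorem isKKTPoint_max_zero {ψ : ℝ → ℝ} {s : Set ℝ} (hmono : MonotoneOn ψ s) {y : ℝ}
    (hy : y ∈ s) (h0 : (0 : ℝ) ∈ s) : IsKKTPoint ψ (ψ y) (max y 0) := by
  refine ⟨le_max_right _ _, ?_, fun hpos => ?_⟩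
  · rcases le_total y 0 with hy0 | hy0
    · rw [max_eq_right hy0]
      exact hmono hy h0 hy0
    · rw [max_eq_left hy0]
  · rw [max_eq_left (lt_max_iff.mp hpos |>.resolve_right (lt_irrefl 0)).le]

namespace IsKKTPoint

variable {ψ : ℝ → ℝ} {c u v : ℝ}

theorem mul_sub_lt_intervalIntegral (h : IsKKTPoint ψ c u) (hcont : ContinuousOn ψ (Ici 0))
    (hmono : StrictMonoOn ψ (Ici 0)) (hv : 0 ≤ v) (hne : v ≠ u) :
    c * (v - u) < ∫ t in u..v, ψ t := by
  obtain ⟨hu, hcu, hψu⟩ := h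
  rcases hne.lt_or_gt with hvu | huv
  · have hsub : Icc v u ⊆ Ici 0 := Icc_subset_Ici_self.trans (Ici_subset_Ici.mpr hv)
    have hlt := intervalIntegral_lt_mul_of_strictMonoOn hvu (hcont.mono hsub) (hmono.mono hsub)
    rw [hψu (hv.trans_lt hvu)] at hlt
    rw [intervalIntegral.integral_symm]
    linarith
  · have hsub : Icc u v ⊆ Ici 0 := Icc_subset_Ici_self.trans (Ici_subset_Ici.mpr hu)
    have hlt := mul_lt_intervalIntegral_of_strictMonoOn huv (hcont.mono hsub) (hmono.mono hsub)
    have hc := mul_le_mul_of_nonneg_right hcu (sub_pos.mpr huv).le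
    linarith

theorem mul_sub_le_intervalIntegral (h : IsKKTPoint ψ c u) (hcont : ContinuousOn ψ (Ici 0))
    (hmono : StrictMonoOn ψ (Ici 0)) (hv : 0 ≤ v) : c * (v - u) ≤ ∫ t in u..v, ψ t := by
  rcases eq_or_ne v u with rfl | hne
  · simp
  · exact (h.mul_sub_lt_intervalIntegral hcont hmono hv hne).le

end IsKKTPoint

section Simplex

variable {A : Type*} [Fintype A] {ψ : ℝ → ℝ}

noncomputable def mirrorObjective (ψ : ℝ → ℝ) (x p : A → ℝ) : ℝ :=
  (∑ a, ∫ t in (1 : ℝ)..(p a), ψ t) - ∑ a, x a * p a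

theorem mirrorObjective_sub (hcont : ContinuousOn ψ (Ici 0)) (x : A → ℝ) (lam : ℝ)
    {p q : A → ℝ} (hp : p ∈ stdSimplex ℝ A) (hq : q ∈ stdSimplex ℝ A) :
    mirrorObjective ψ x p - mirrorObjective ψ x q =
      ∑ a, ((∫ t in (q a)..(p a), ψ t) - (x a + lam) * (p a - q a)) := by
  have hint : ∀ u v : ℝ, 0 ≤ u → 0 ≤ v → IntervalIntegrable ψ MeasureTheory.volume u v :=
    fun u v hu hv => (hcont.mono fun _ ht => (le_inf hu hv).trans ht.1).intervalIntegrable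
  have hsplit : ∀ a, (∫ t in (1 : ℝ)..(p a), ψ t) - ∫ t in (1 : ℝ)..(q a), ψ t =
      ∫ t in (q a)..(p a), ψ t := fun a =>
    intervalIntegral.integral_interval_sub_left (hint _ _ zero_le_one (hp.1 a))
      (hint _ _ zero_le_one (hq.1 a))
  have hlam : ∑ a, lam * p a = ∑ a, lam * q a := by
    rw [← Finset.mul_sum, ← Finset.mul_sum, hp.2, hq.2]
  simp only [mirrorObjective, ← hsplit, add_mul, mul_sub, Finset.sum_sub_distrib,
    Finset.sum_add_distrib]
  linarith

theorem mirrorObjective_lt_of_ne (hcont : ContinuousOn ψ (Ici 0))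
    (hmono : StrictMonoOn ψ (Ici 0)) {x q p : A → ℝ} {lam : ℝ}
    (hkkt : ∀ a, IsKKTPoint ψ (x a + lam) (q a)) (hq : ∑ a, q a = 1)
    (hp : p ∈ stdSimplex ℝ A) (hne : p ≠ q) : mirrorObjective ψ x q < mirrorObjective ψ x p := by
  obtain ⟨a, ha⟩ := Function.ne_iff.mp hne
  have hdiff := mirrorObjective_sub hcont x lam hp ⟨fun a => (hkkt a).1, hq⟩
  have hpos : 0 < ∑ a, ((∫ t in (q a)..(p a), ψ t) - (x a + lam) * (p a - q a)) :=
    Finset.sum_pos' (fun b _ => sub_nonneg.mpr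
        ((hkkt b).mul_sub_le_intervalIntegral hcont hmono (hp.1 b)))
      ⟨a, Finset.mem_univ a,
        sub_pos.mpr ((hkkt a).mul_sub_lt_intervalIntegral hcont hmono (hp.1 a) ha)⟩
  linarith

theorem mirrorObjective_le (hcont : ContinuousOn ψ (Ici 0))
    (hmono : StrictMonoOn ψ (Ici 0)) {x q p : A → ℝ} {lam : ℝ}
    (hkkt : ∀ a, IsKKTPoint ψ (x a + lam) (q a)) (hq : ∑ a, q a = 1)
    (hp : p ∈ stdSimplex ℝ A) : mirrorObjective ψ x q ≤ mirrorObjective ψ x p := by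
  rcases eq_or_ne p q with rfl | hne
  · exact le_rfl
  · exact (mirrorObjective_lt_of_ne hcont hmono hkkt hq hp hne).le

theorem exists_sum_max_eq_one [Nonempty A] (x : A → ℝ) {φ : ℝ → ℝ} (hcont : Continuous φ)
    (hmono : Monotone φ) (hneg : ∃ z, φ z ≤ 0) (hone : ∃ z, 1 ≤ φ z) :
    ∃ lam, ∑ a, max (φ (x a + lam)) 0 = 1 := by
  obtain ⟨z₀, hz₀⟩ := hneg
  obtain ⟨z₁, hz₁⟩ := hone
  obtain ⟨M, hM⟩ := (finite_range x).bddAbove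
  let a₀ := Classical.arbitrary A
  set g : ℝ → ℝ := fun lam => ∑ a, max (φ (x a + lam)) 0
  have hg_cont : Continuous g := by fun_prop
  have hg_low : g (z₀ - M) = 0 := Finset.sum_eq_zero fun a _ =>
    max_eq_right ((hmono (by linarith [hM (mem_range_self a)])).trans hz₀)
  have hg_high : 1 ≤ g (z₁ - x a₀) :=
    calc 1 ≤ max (φ z₁) 0 := hz₁.trans (le_max_left _ _)
      _ = max (φ (x a₀ + (z₁ - x a₀))) 0 := by rw [add_sub_cancel]
      _ ≤ g (z₁ - x a₀) := Finset.single_le_sum (f := fun a => max (φ (x a + (z₁ - x a₀))) 0)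
          (fun a _ => le_max_right _ _) (mem_univ a₀)
  obtain ⟨lam, -, hlam⟩ := intermediate_value_uIcc hg_cont.continuousOn
    (mem_uIcc.mpr (Or.inl ⟨hg_low.le.trans zero_le_one, hg_high⟩))
  exact ⟨lam, hlam⟩

end Simplex

theorem omega_potential_bregman_projection_general {A : Type*} [Fintype A] [Nonempty A]
    (ω : ℝ) (hω : ω < 0) (φ ψ : ℝ → ℝ)
    (hφcont : Continuous φ) (hφmono : StrictMono φ)
    (hφrange : Set.range φ = Set.Ioi ω)
    (hψcont : ContinuousOn ψ (Set.Ioi ω)) (hψmono : StrictMonoOn ψ (Set.Ioi ω))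
    (hinv₁ : ∀ z : ℝ, ψ (φ z) = z)
    (x : A → ℝ) (π : A → ℝ) (hπ : π ∈ stdSimplex ℝ A) :
    (∀ p ∈ stdSimplex ℝ A,
        (∑ a, ∫ t in (1:ℝ)..(π a), ψ t) - ∑ a, x a * π a ≤
          (∑ a, ∫ t in (1:ℝ)..(p a), ψ t) - ∑ a, x a * p a) ↔
      ∃ lam : ℝ, ∀ a, π a = max (φ (x a + lam)) 0 := by
  change (∀ p ∈ stdSimplex ℝ A, mirrorObjective ψ x π ≤ mirrorObjective ψ x p) ↔ _
  have hIci : Ici (0 : ℝ) ⊆ Ioi ω := Ici_subset_Ioi.mpr hω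
  have hcont := hψcont.mono hIci
  have hmono := hψmono.mono hIci
  have hkkt : ∀ c, IsKKTPoint ψ c (max (φ c) 0) := fun c => by
    have h := isKKTPoint_max_zero hψmono.monotoneOn (hφrange ▸ mem_range_self c) (hIci self_mem_Ici)
    rwa [hinv₁] at h
  have hvalue : ∀ y ∈ Ioi ω, ∃ z, φ z = y := fun y hy => (hφrange ▸ hy : y ∈ range φ)
  constructor
  · intro hmin
    obtain ⟨lam, hlam⟩ := exists_sum_max_eq_one x hφcont hφmono.monotone
      ((hvalue (ω / 2) (mem_Ioi.mpr (by linarith))).imp fun _ h => by linarith)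
      ((hvalue 1 (mem_Ioi.mpr (by linarith))).imp fun _ h => h.ge)
    refine ⟨lam, congrFun ?_⟩
    by_contra hne
    exact (hmin _ ⟨fun a => le_max_right _ _, hlam⟩).not_gt
      (mirrorObjective_lt_of_ne hcont hmono (fun _ => hkkt _) hlam hπ hne)
  · rintro ⟨lam, hlam⟩ p hp
    obtain rfl : π = fun a => max (φ (x a + lam)) 0 := funext hlam
    exact mirrorObjective_le hcont hmono (fun _ => hkkt _) hπ.2 hp

/-- characterization of the Bregman projection for ω-potential mirror maps
(Proposition 3.5, after Krichene et al.). For an increasing potential `φ` with range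
`(ω, +∞)`, `ω < 0`, and mirror map `h(p) = ∑_a ∫_1^{p_a} φ⁻¹(t) dt`, a point `π` of the
simplex minimizes `p ↦ h(p) − ⟨x, p⟩` over the simplex iff `π_a = max(φ(x_a + λ), 0)`
for some normalization constant `λ`. -/
theorem omega_potential_bregman_projection {A : Type*} [Fintype A] [Nonempty A]
    (ω : ℝ) (hω : ω < 0) (φ ψ : ℝ → ℝ)
    (hφcont : Continuous φ) (hφmono : StrictMono φ)
    (hφrange : Set.range φ = Set.Ioi ω)
    (hψcont : ContinuousOn ψ (Set.Ioi ω)) (hψmono : StrictMonoOn ψ (Set.Ioi ω))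
    (hinv₁ : ∀ z : ℝ, ψ (φ z) = z)
    (hinv₂ : ∀ t ∈ Set.Ioi ω, φ (ψ t) = t)
    (x : A → ℝ) (π : A → ℝ) (hπ : π ∈ stdSimplex ℝ A) :
    (∀ p ∈ stdSimplex ℝ A,
        (∑ a, ∫ t in (1:ℝ)..(π a), ψ t) - ∑ a, x a * π a ≤
          (∑ a, ∫ t in (1:ℝ)..(p a), ψ t) - ∑ a, x a * p a) ↔
      ∃ lam : ℝ, ∀ a, π a = max (φ (x a + lam)) 0 :=
  omega_potential_bregman_projection_general ω hω φ ψ hφcont hφmono hφrange hψcont hψmono hinv₁ x π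
    hπ
end
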